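/- For every real number α with 0 < α < 2 and every Sidon set S of positive integers, the function t ↦ f_S(t)^α is integrable on (0,1), i.e. ∫₀¹ f_S(t)^α dt < +∞. -/
import Mathlib


open scoped ENNReal

/-- A set of positive integers is a Sidon set: all pairwise sums `s + t`
with `s ≤ t` are distinct. -/
def IsSidon (S : Set ℕ) : Prop :=
  (∀ s ∈ S, 0 < s) ∧
    ∀ a ∈ S, ∀ b ∈ S, ∀ c ∈ S, ∀ d ∈ S,
      a ≤ b → c ≤ d → a + b = c + d → a = c ∧ b = d

/-- The generating function `f_S(t) = ∑_{s ∈ S} t ^ s`. -/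
noncomputable def genFun (S : Set ℕ) (t : ℝ) : ℝ :=
  ∑' s : S, t ^ (s : ℕ)

lemma sidon_pair (S : Set ℕ) (hS : IsSidon S) {p q : ℕ × ℕ}
    (hp1 : p.1 ∈ S) (hp2 : p.2 ∈ S) (hq1 : q.1 ∈ S) (hq2 : q.2 ∈ S)
    (h : p.1 + p.2 = q.1 + q.2) : q = p ∨ q = p.swap := by
  rcases le_total p.1 p.2 with h1 | h1 <;> rcases le_total q.1 q.2 with h2 | h2
  · obtain ⟨e1, e2⟩ := hS.2 p.1 hp1 p.2 hp2 q.1 hq1 q.2 hq2 h1 h2 h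
    exact Or.inl (Prod.ext e1.symm e2.symm)
  · obtain ⟨e1, e2⟩ := hS.2 p.1 hp1 p.2 hp2 q.2 hq2 q.1 hq1 h1 h2 (by omega)
    exact Or.inr (Prod.ext e2.symm e1.symm)
  · obtain ⟨e1, e2⟩ := hS.2 p.2 hp2 p.1 hp1 q.1 hq1 q.2 hq2 h1 h2 (by omega)
    exact Or.inr (Prod.ext e1.symm e2.symm)
  · obtain ⟨e1, e2⟩ := hS.2 p.2 hp2 p.1 hp1 q.2 hq2 q.1 hq1 h1 h2 (by omega)
    exact Or.inl (Prod.ext e2.symm e1.symm)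

lemma fiber_card_le (S : Set ℕ) (hS : IsSidon S) (F : Finset ℕ) (hF : ↑F ⊆ S) (n : ℕ) :
    ((F ×ˢ F).filter (fun p => p.1 + p.2 = n)).card ≤ 2 := by
  set T := (F ×ˢ F).filter (fun p => p.1 + p.2 = n) with hT
  rcases T.eq_empty_or_nonempty with h | ⟨p, hp⟩
  · simp [h]
  · have hp' := hp
    simp only [hT, Finset.mem_filter, Finset.mem_product] at hp'
    have hsub : T ⊆ {p, p.swap} := by
      intro q hq
      simp only [hT, Finset.mem_filter, Finset.mem_product] at hq
      rcases sidon_pair S hS (hF hp'.1.1) (hF hp'.1.2) (hF hq.1.1) (hF hq.1.2)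
        (hp'.2.trans hq.2.symm) with h' | h'
      · exact Finset.mem_insert.2 (Or.inl h')
      · exact Finset.mem_insert.2 (Or.inr (Finset.mem_singleton.2 h'))
    calc T.card ≤ ({p, p.swap} : Finset (ℕ × ℕ)).card := Finset.card_le_card hsub
      _ ≤ 2 := by
          refine (Finset.card_insert_le _ _).trans ?_
          simp

lemma finset_sum_sq_le (S : Set ℕ) (hS : IsSidon S) {t : ℝ} (ht0 : 0 ≤ t) (ht1 : t < 1)
    (F : Finset ℕ) (hF : ↑F ⊆ S) :
    (∑ s ∈ F, t ^ s) ^ 2 ≤ 2 * (1 - t)⁻¹ := by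
  have hsum : Summable (fun n : ℕ => t ^ n) := summable_geometric_of_lt_one ht0 ht1
  have key : (∑ s ∈ F, t ^ s) ^ 2 = ∑ p ∈ F ×ˢ F, t ^ (p.1 + p.2) := by
    rw [sq, Finset.sum_mul_sum, Finset.sum_product]
    simp [pow_add]
  rw [key, Finset.sum_comp (fun n : ℕ => t ^ n) (fun p : ℕ × ℕ => p.1 + p.2)]
  calc ∑ b ∈ (F ×ˢ F).image (fun p : ℕ × ℕ => p.1 + p.2),
        ((F ×ˢ F).filter (fun p : ℕ × ℕ => p.1 + p.2 = b)).card • t ^ b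
      ≤ ∑ b ∈ (F ×ˢ F).image (fun p : ℕ × ℕ => p.1 + p.2), 2 * t ^ b := by
        refine Finset.sum_le_sum (fun b _ => ?_)
        rw [nsmul_eq_mul]
        exact mul_le_mul_of_nonneg_right
          (by exact_mod_cast fiber_card_le S hS F hF b) (pow_nonneg ht0 b)
    _ = 2 * ∑ b ∈ (F ×ˢ F).image (fun p : ℕ × ℕ => p.1 + p.2), t ^ b := by
        rw [Finset.mul_sum]
    _ ≤ 2 * ∑' n : ℕ, t ^ n := by
        have := Summable.sum_le_tsum ((F ×ˢ F).image (fun p : ℕ × ℕ => p.1 + p.2))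
          (fun n _ => pow_nonneg ht0 n) hsum
        linarith
    _ = 2 * (1 - t)⁻¹ := by rw [tsum_geometric_of_lt_one ht0 ht1]

lemma genFun_le (S : Set ℕ) (hS : IsSidon S) {t : ℝ} (ht0 : 0 ≤ t) (ht1 : t < 1) :
    genFun S t ≤ Real.sqrt (2 * (1 - t)⁻¹) := by
  have h1t : (0:ℝ) < 1 - t := by linarith
  have hsummable : Summable (fun s : S => t ^ (s : ℕ)) :=
    (summable_geometric_of_lt_one ht0 ht1).subtype S
  refine Summable.tsum_le_of_sum_le hsummable (fun F => ?_)
  rw [Real.le_sqrt (Finset.sum_nonneg fun s _ => pow_nonneg ht0 _)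
    (mul_nonneg (by norm_num) (inv_nonneg.2 h1t.le))]
  have himg : ∑ s ∈ F, t ^ (s : ℕ) = ∑ n ∈ F.image (Subtype.val), t ^ n :=
    (Finset.sum_image (fun x _ y _ h => Subtype.ext h)).symm
  rw [himg]
  refine finset_sum_sq_le S hS ht0 ht1 _ ?_
  intro n hn
  rw [Finset.coe_image] at hn
  obtain ⟨s, _, rfl⟩ := hn
  exact s.2

theorem genFun_rpow_integrable (α : ℝ) (hα0 : 0 < α) (hα2 : α < 2)
    (S : Set ℕ) (hS : IsSidon S) :
    (∫⁻ t in Set.Ioo (0 : ℝ) 1, ENNReal.ofReal (genFun S t ^ α)) ≠ ⊤ := by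
  set c : ℝ := α / 2 with hc
  have hc0 : 0 < c := by positivity
  have hc1 : c < 1 := by rw [hc]; linarith
  -- pointwise bound
  have hbound : ∀ t ∈ Set.Ioo (0:ℝ) 1,
      ENNReal.ofReal (genFun S t ^ α) ≤
        ENNReal.ofReal ((2:ℝ) ^ c) * ENNReal.ofReal ((1 - t) ^ (-c)) := by
    intro t ht
    obtain ⟨ht0, ht1⟩ := ht
    have h1t : (0:ℝ) < 1 - t := by linarith
    have hgnn : 0 ≤ genFun S t := tsum_nonneg (fun s => pow_nonneg ht0.le _)
    have hu : (0:ℝ) ≤ 2 * (1 - t)⁻¹ := mul_nonneg (by norm_num) (inv_nonneg.2 h1t.le)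
    have h1 : genFun S t ^ α ≤ Real.sqrt (2 * (1 - t)⁻¹) ^ α :=
      Real.rpow_le_rpow hgnn (genFun_le S hS ht0.le ht1) hα0.le
    have h2 : Real.sqrt (2 * (1 - t)⁻¹) ^ α = (2 * (1 - t)⁻¹) ^ c := by
      rw [Real.sqrt_eq_rpow, ← Real.rpow_mul hu,
        show (1:ℝ)/2*α = c by rw [hc]; ring]
    have h3 : (2 * (1 - t)⁻¹ : ℝ) ^ c = (2:ℝ) ^ c * (1 - t) ^ (-c) := by
      rw [Real.mul_rpow (by norm_num) (inv_nonneg.2 h1t.le),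
        ← Real.rpow_neg_one (1 - t), ← Real.rpow_mul h1t.le]
      norm_num
    rw [← ENNReal.ofReal_mul (Real.rpow_nonneg (by norm_num) c), ← h3, ← h2]
    exact ENNReal.ofReal_le_ofReal h1
  have hmono : (∫⁻ t in Set.Ioo (0:ℝ) 1, ENNReal.ofReal (genFun S t ^ α)) ≤
      ∫⁻ t in Set.Ioo (0:ℝ) 1,
        ENNReal.ofReal ((2:ℝ) ^ c) * ENNReal.ofReal ((1 - t) ^ (-c)) := by
    refine MeasureTheory.lintegral_mono_ae ?_
    exact (MeasureTheory.ae_restrict_iff' measurableSet_Ioo).2 (Filter.Eventually.of_forall hbound)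
  refine ne_top_of_le_ne_top ?_ hmono
  rw [MeasureTheory.lintegral_const_mul' _ _ ENNReal.ofReal_ne_top]
  have hcomp : (∫⁻ t in Set.Ioo (0:ℝ) 1, ENNReal.ofReal ((1 - t) ^ (-c))) =
      ∫⁻ y in Set.Ioo (0:ℝ) 1, ENNReal.ofReal (y ^ (-c)) := by
    have := (MeasureTheory.Measure.measurePreserving_sub_left
        (MeasureTheory.volume : MeasureTheory.Measure ℝ) 1).setLIntegral_comp_emb
      (Homeomorph.subLeft (1:ℝ)).measurableEmbedding
      (fun y => ENNReal.ofReal (y ^ (-c))) (Set.Ioo 0 1)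
    rw [Set.image_const_sub_Ioo] at this
    norm_num at this
    convert this using 1
  rw [hcomp]
  have hint : MeasureTheory.IntegrableOn (fun y : ℝ => y ^ (-c)) (Set.Ioo 0 1) :=
    (intervalIntegral.integrableOn_Ioo_rpow_iff one_pos).2 (by linarith)
  exact ENNReal.mul_ne_top ENNReal.ofReal_ne_top hint.lintegral_lt_top.ne
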